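/- For any policy π of a finite discounted MDP and any nonnegative function g : S×A → ℝ, E_{(s̄,ā)∼d^π} E_{s∼P(·|s̄,ā)} E_{a∼π(·|s)}[g(s,a)] ≤ (1/γ) · E_{(s,a)∼d^π}[g(s,a)]. -/

import Mathlib

open Finset

structure FinMDP (S A : Type*) [Fintype S] [Fintype A] where
  P : S → A → S → ℝ
  P_nonneg : ∀ s a s', 0 ≤ P s a s'
  P_sum : ∀ s a, ∑ s', P s a s' = 1
  r : S → A → ℝ
  r_nonneg : ∀ s a, 0 ≤ r s a
  r_le_one : ∀ s a, r s a ≤ 1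
  disc : ℝ
  disc_pos : 0 < disc
  disc_lt_one : disc < 1
  init : S → ℝ
  init_nonneg : ∀ s, 0 ≤ init s
  init_sum : ∑ s, init s = 1

variable {S A : Type*} [Fintype S] [Fintype A] [Nonempty S] [Nonempty A]

/-- A policy assigns to each state a probability mass function over actions. -/
def IsPolicy (π : S → A → ℝ) : Prop :=
  (∀ s a, 0 ≤ π s a) ∧ ∀ s, ∑ a, π s a = 1

/-- The Bellman operator `T^π`. -/
noncomputable def FinMDP.bellman (M : FinMDP S A) (π f : S → A → ℝ) (s : S) (a : A) : ℝ :=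
  M.r s a + M.disc * ∑ s', M.P s a s' * ∑ a', π s' a' * f s' a'

/-- `Q` is the action-value function of `π`, i.e. satisfies the Bellman equation. -/
def FinMDP.IsQ (M : FinMDP S A) (π Q : S → A → ℝ) : Prop :=
  ∀ s a, Q s a = M.bellman π Q s a

/-- The state value `V^π(s)` induced by a `Q`-function. -/
noncomputable def vOf (π Q : S → A → ℝ) (s : S) : ℝ := ∑ a, π s a * Q s a

/-- The scalar value `V^π = E_{s ∼ μ₀}[V^π(s)]`. -/
noncomputable def FinMDP.scalarV (M : FinMDP S A) (π Q : S → A → ℝ) : ℝ :=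
  ∑ s, M.init s * vOf π Q s

/-- Distribution of the state at time `t` under policy `π`. -/
noncomputable def FinMDP.stateDist (M : FinMDP S A) (π : S → A → ℝ) : ℕ → S → ℝ
  | 0 => M.init
  | (t + 1) => fun s' => ∑ s, ∑ a, FinMDP.stateDist M π t s * π s a * M.P s a s'

/-- The discounted occupancy measure `d^π(s,a) = (1-γ) ∑_t γ^t Pr^π(s_t = s, a_t = a)`. -/
noncomputable def FinMDP.occ (M : FinMDP S A) (π : S → A → ℝ) (s : S) (a : A) : ℝ :=
  (1 - M.disc) * ∑' t : ℕ, M.disc ^ t * M.stateDist π t s * π s a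

/-! The state marginal `d^π(s)` of the occupancy measure satisfies the Bellman flow equation
`d^π(s) = (1 - γ) μ₀(s) + γ ∑_{s̄,ā} d^π(s̄,ā) P(s|s̄,ā)`, so the discounted mass flowing into `s`
is at most `d^π(s) / γ`. Weighting by the nonnegative `∑ₐ π(a|s) g(s,a)` and summing over `s`
gives the inequality. -/

namespace FinMDP

variable {S A : Type*} [Fintype S] [Fintype A] (M : FinMDP S A) {π : S → A → ℝ}

/-- The state marginal `d^π(s) = ∑ₐ d^π(s,a)` of the occupancy measure. -/
noncomputable def stateOcc (π : S → A → ℝ) (s : S) : ℝ :=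
  (1 - M.disc) * ∑' t : ℕ, M.disc ^ t * M.stateDist π t s

theorem occ_eq_stateOcc_mul (π : S → A → ℝ) (s : S) (a : A) :
    M.occ π s a = M.stateOcc π s * π s a := by
  rw [occ, stateOcc, tsum_mul_right, mul_assoc]

theorem stateDist_nonneg (hπ : IsPolicy π) (t : ℕ) (s : S) : 0 ≤ M.stateDist π t s := by
  induction t generalizing s with
  | zero => exact M.init_nonneg s
  | succ t ih =>
    exact sum_nonneg fun s' _ => sum_nonneg fun a _ =>
      mul_nonneg (mul_nonneg (ih s') (hπ.1 s' a)) (M.P_nonneg s' a s)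

theorem sum_stateDist (hπ : IsPolicy π) (t : ℕ) : ∑ s, M.stateDist π t s = 1 := by
  induction t with
  | zero => exact M.init_sum
  | succ t ih =>
    calc ∑ s', ∑ s, ∑ a, M.stateDist π t s * π s a * M.P s a s'
        = ∑ s, M.stateDist π t s * ∑ a, π s a * ∑ s', M.P s a s' := by
          rw [sum_comm]
          refine sum_congr rfl fun s _ => ?_
          rw [sum_comm, mul_sum]
          simp only [mul_sum, mul_assoc]
      _ = 1 := by simp only [M.P_sum, mul_one, hπ.2, ih]

theorem summable_disc_pow_mul_stateDist (hπ : IsPolicy π) (s : S) :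
    Summable fun t => M.disc ^ t * M.stateDist π t s := by
  have hγ := M.disc_pos.le
  refine (summable_geometric_of_lt_one hγ M.disc_lt_one).of_nonneg_of_le
    (fun t => mul_nonneg (pow_nonneg hγ t) (M.stateDist_nonneg hπ t s)) fun t => ?_
  refine mul_le_of_le_one_right (pow_nonneg hγ t) ?_
  calc M.stateDist π t s ≤ ∑ s', M.stateDist π t s' :=
        single_le_sum (fun s' _ => M.stateDist_nonneg hπ t s') (mem_univ s)
    _ = 1 := M.sum_stateDist hπ t

theorem stateOcc_eq_init_add_flow (hπ : IsPolicy π) (s : S) :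
    M.stateOcc π s
      = (1 - M.disc) * M.init s + M.disc * ∑ sb, ∑ ab, M.occ π sb ab * M.P sb ab s := by
  have hV (s' : S) := (M.summable_disc_pow_mul_stateDist hπ s').hasSum
  -- the discounted visits at times `t + 1` are the one-step pushforward of those at times `t`
  have hshift : HasSum (fun t => M.disc ^ t * M.stateDist π (t + 1) s)
      (∑ sb, ∑ ab, (∑' t, M.disc ^ t * M.stateDist π t sb) * π sb ab * M.P sb ab s) := by
    refine (hasSum_sum fun sb _ => hasSum_sum fun ab _ =>
      ((hV sb).mul_right (π sb ab)).mul_right (M.P sb ab s)).congr_fun fun t => ?_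
    simp only [stateDist, mul_sum, mul_assoc]
  have hsucc : ∑' t, M.disc ^ (t + 1) * M.stateDist π (t + 1) s
      = M.disc * ∑ sb, ∑ ab, (∑' t, M.disc ^ t * M.stateDist π t sb) * π sb ab * M.P sb ab s := by
    rw [← hshift.tsum_eq, ← tsum_mul_left]
    simp only [pow_succ, mul_assoc, mul_left_comm M.disc]
  simp only [occ_eq_stateOcc_mul, stateOcc]
  rw [(hV s).summable.tsum_eq_zero_add, hsucc]
  simp only [stateDist, pow_zero, one_mul, mul_assoc, ← mul_sum]
  ring

theorem disc_mul_flow_le_stateOcc (hπ : IsPolicy π) (s : S) :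
    M.disc * ∑ sb, ∑ ab, M.occ π sb ab * M.P sb ab s ≤ M.stateOcc π s := by
  rw [M.stateOcc_eq_init_add_flow hπ s, le_add_iff_nonneg_left]
  exact mul_nonneg (sub_nonneg.2 M.disc_lt_one.le) (M.init_nonneg s)

end FinMDP

theorem stmt2 (M : FinMDP S A) (π : S → A → ℝ) (hπ : IsPolicy π)
    (g : S → A → ℝ) (hg : ∀ s a, 0 ≤ g s a) :
    ∑ sb, ∑ ab, M.occ π sb ab * ∑ s, M.P sb ab s * ∑ a, π s a * g s a
      ≤ (1 / M.disc) * ∑ s, ∑ a, M.occ π s a * g s a := by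
  set f : S → ℝ := fun s => ∑ a, π s a * g s a
  have hf (s : S) : 0 ≤ f s := sum_nonneg fun a _ => mul_nonneg (hπ.1 s a) (hg s a)
  calc ∑ sb, ∑ ab, M.occ π sb ab * ∑ s, M.P sb ab s * f s
      = ∑ s, (∑ sb, ∑ ab, M.occ π sb ab * M.P sb ab s) * f s := by
        simp only [mul_sum, sum_mul, mul_assoc]
        exact (sum_congr rfl fun sb _ => sum_comm).trans sum_comm
    _ ≤ ∑ s, M.stateOcc π s / M.disc * f s := by
        gcongr with s
        · exact hf s
        · rw [le_div_iff₀' M.disc_pos]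
          exact M.disc_mul_flow_le_stateOcc hπ s
    _ = (1 / M.disc) * ∑ s, ∑ a, M.occ π s a * g s a := by
        simp only [f, M.occ_eq_stateOcc_mul, mul_sum]
        exact sum_congr rfl fun s _ => sum_congr rfl fun a _ => by ring
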